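/- arXiv:2003.12495 — 2 statements merged into one kernel-verified Lean document; each statement's English description precedes it below -/
import Mathlib

section
/- Let s = m + α with m ∈ ℕ, 0 < α ≤ 1, and let X, Y be random variables with E|X|^s < ∞, E|Y|^s < ∞, and E X^k = E Y^k for k = 1, …, m. Then ζ_s(X, Y) ≤ (Γ(1 + α) / Γ(1 + s)) · (E|X|^s + E|Y|^s). -/
open MeasureTheory ProbabilityTheory Real Set Finset

noncomputable section

/-- The Zolotarev function class `F_s` for `s = m + α`: bounded, `m` times
continuously differentiable functions whose `m`-th derivative is `α`-Hölder
with constant 1. -/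
def zClass (m : ℕ) (α : ℝ) : Set (ℝ → ℝ) :=
  {f | (∃ C, ∀ x, |f x| ≤ C) ∧ ContDiff ℝ m f ∧
    ∀ x y, |iteratedDeriv m f x - iteratedDeriv m f y| ≤ |x - y| ^ α}

/-- Zolotarev ζ-distance between two laws on ℝ, for `s = m + α`. -/
def zetaM (m : ℕ) (α : ℝ) (P Q : Measure ℝ) : ℝ :=
  sSup { d | ∃ f ∈ zClass m α, d = |(∫ x, f x ∂P) - ∫ x, f x ∂Q| }

/-- Zolotarev ζ-distance between two random variables. -/
def zeta {Ω₁ Ω₂ : Type*} [MeasurableSpace Ω₁] [MeasurableSpace Ω₂]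
    (m : ℕ) (α : ℝ) (P₁ : Measure Ω₁) (P₂ : Measure Ω₂)
    (X : Ω₁ → ℝ) (Y : Ω₂ → ℝ) : ℝ :=
  zetaM m α (P₁.map X) (P₂.map Y)

end


/-!
Subtract from `f` its Taylor polynomial of degree `m` at `0`: by the moment condition it has the
same expectation under `X` and under `Y`. The remainder is at most
`Γ(1 + α) / Γ(1 + s) * |x| ^ s`, by induction on `m`: for `m = 0` this is the Hölder condition,
and integrating the bound of order `m` from `0` to `x` divides its constant by `m + 1 + α`,
which is the ratio `Γ(m + 2 + α) / Γ(m + 1 + α)`.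
-/

noncomputable def maclaurin (m : ℕ) (f : ℝ → ℝ) (x : ℝ) : ℝ :=
  ∑ k ∈ range (m + 1), iteratedDeriv k f 0 * x ^ k / k.factorial

lemma maclaurin_zero_right (m : ℕ) (f : ℝ → ℝ) : maclaurin m f 0 = f 0 := by
  rw [maclaurin, Finset.sum_eq_single 0 (fun k _ hk => by simp [zero_pow hk]) (by simp)]
  simp

lemma hasDerivAt_maclaurin_succ (m : ℕ) (f : ℝ → ℝ) (x : ℝ) :
    HasDerivAt (maclaurin (m + 1) f) (maclaurin m (deriv f) x) x := by
  have h := HasDerivAt.fun_sum (u := range (m + 1 + 1)) (x := x) fun k _ =>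
    ((hasDerivAt_pow k x).const_mul (iteratedDeriv k f 0)).div_const (k.factorial : ℝ)
  refine h.congr_deriv ?_
  rw [Finset.sum_range_succ', maclaurin]
  simp only [CharP.cast_eq_zero, zero_mul, mul_zero, zero_div, add_zero]
  refine Finset.sum_congr rfl fun k _ => ?_
  rw [iteratedDeriv_succ', Nat.factorial_succ, Nat.add_sub_cancel]
  push_cast
  field_simp

lemma maclaurin_comp_neg (m : ℕ) (f : ℝ → ℝ) (x : ℝ) :
    maclaurin m (fun t => f (-t)) (-x) = maclaurin m f x := by
  refine Finset.sum_congr rfl fun k _ => ?_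
  rw [iteratedDeriv_comp_neg, neg_zero, smul_eq_mul, neg_pow x, ← mul_assoc,
    mul_comm _ ((-1) ^ k), ← mul_assoc, ← mul_pow]
  norm_num

lemma Gamma_div_Gamma_add_one_mul {a b : ℝ} (hb : 0 < b) :
    Gamma a / Gamma (b + 1) * b = Gamma a / Gamma b := by
  rw [Gamma_add_one hb.ne']
  field_simp [(Gamma_pos_of_pos hb).ne']

lemma abs_sub_maclaurin_le_of_nonneg {α : ℝ} (hα : 0 < α) (m : ℕ) {g : ℝ → ℝ}
    (hg : ContDiff ℝ m g) (hhol : ∀ t, |iteratedDeriv m g t - iteratedDeriv m g 0| ≤ |t| ^ α)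
    {x : ℝ} (hx : 0 ≤ x) :
    |g x - maclaurin m g x| ≤ Gamma (1 + α) / Gamma (m + 1 + α) * x ^ ((m : ℝ) + α) := by
  induction m generalizing g x with
  | zero =>
    have h := hhol x
    simp only [iteratedDeriv_zero, abs_of_nonneg hx] at h
    simpa [maclaurin, div_self (Gamma_pos_of_pos (by linarith : (0 : ℝ) < 1 + α)).ne'] using h
  | succ m ih =>
    have hg : ContDiff ℝ ((m : WithTop ℕ∞) + 1) g := by exact_mod_cast hg
    obtain ⟨hgd, -, hg'⟩ := contDiff_succ_iff_deriv.1 hg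
    have hhol' :
        ∀ t, |iteratedDeriv m (deriv g) t - iteratedDeriv m (deriv g) 0| ≤ |t| ^ α := by
      simpa only [iteratedDeriv_succ'] using hhol
    set c := Gamma (1 + α) / Gamma (m + 1 + α + 1)
    have hp : (1 : ℝ) ≤ m + 1 + α := by linarith [(m.cast_nonneg : (0 : ℝ) ≤ m)]
    -- The remainder vanishes at `0` and its derivative is the order-`m` remainder of `deriv g`,
    -- so it is fenced in by an antiderivative of the order-`m` bound.
    have hB : ∀ t, HasDerivAt (fun t => c * t ^ ((m : ℝ) + 1 + α))
        (c * (((m : ℝ) + 1 + α) * t ^ ((m : ℝ) + 1 + α - 1))) t := fun t =>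
      (hasDerivAt_rpow_const (Or.inr hp)).const_mul c
    have hF : ∀ t, HasDerivAt (fun t => g t - maclaurin (m + 1) g t)
        (deriv g t - maclaurin m (deriv g) t) t := fun t =>
      (hgd t).hasDerivAt.sub (hasDerivAt_maclaurin_succ m g t)
    have key := image_norm_le_of_norm_deriv_right_le_deriv_boundary (a := 0) (b := x)
      (fun t _ => (hF t).continuousAt.continuousWithinAt) (fun t _ => (hF t).hasDerivWithinAt)
      (by simp [maclaurin_zero_right, Real.zero_rpow (by linarith : (m : ℝ) + 1 + α ≠ 0)]) hB
      (fun t ht => by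
        rw [Real.norm_eq_abs, ← mul_assoc, show (m : ℝ) + 1 + α - 1 = m + α by ring]
        simpa [c, Gamma_div_Gamma_add_one_mul (by linarith : (0 : ℝ) < m + 1 + α)] using
          ih hg' hhol' ht.1) ⟨hx, le_rfl⟩
    rw [Real.norm_eq_abs] at key
    convert key using 3
    · congr 1; push_cast; ring
    · push_cast; ring

lemma abs_sub_maclaurin_le {α : ℝ} (hα : 0 < α) (m : ℕ) {g : ℝ → ℝ}
    (hg : ContDiff ℝ m g) (hhol : ∀ t, |iteratedDeriv m g t - iteratedDeriv m g 0| ≤ |t| ^ α)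
    (x : ℝ) :
    |g x - maclaurin m g x| ≤ Gamma (1 + α) / Gamma (m + 1 + α) * |x| ^ ((m : ℝ) + α) := by
  rcases le_total 0 x with hx | hx
  · simpa [abs_of_nonneg hx] using abs_sub_maclaurin_le_of_nonneg hα m hg hhol hx
  · have hhol_neg : ∀ t, |iteratedDeriv m (fun u => g (-u)) t -
        iteratedDeriv m (fun u => g (-u)) 0| ≤ |t| ^ α := fun t => by
      simpa [iteratedDeriv_comp_neg, ← mul_sub, abs_mul] using hhol (-t)
    simpa [maclaurin_comp_neg, abs_of_nonpos hx] using
      abs_sub_maclaurin_le_of_nonneg (g := fun u => g (-u)) hα m (hg.comp contDiff_neg) hhol_neg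
        (neg_nonneg.2 hx)

section Moments

variable {Ω : Type*} [MeasurableSpace Ω] {μ : Measure Ω}

lemma integrable_maclaurin_comp {m : ℕ} (f : ℝ → ℝ) {X : Ω → ℝ}
    (hX : ∀ k ≤ m, Integrable (fun ω => X ω ^ k) μ) :
    Integrable (fun ω => maclaurin m f (X ω)) μ :=
  integrable_finsetSum _ fun k hk =>
    ((hX k (Nat.lt_succ_iff.1 (mem_range.1 hk))).const_mul _).div_const _

lemma integral_maclaurin_comp_eq_of_moments {m : ℕ} (f : ℝ → ℝ) {X Y : Ω → ℝ}
    (hX : ∀ k ≤ m, Integrable (fun ω => X ω ^ k) μ)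
    (hY : ∀ k ≤ m, Integrable (fun ω => Y ω ^ k) μ)
    (hmom : ∀ k : ℕ, 1 ≤ k → k ≤ m → ∫ ω, X ω ^ k ∂μ = ∫ ω, Y ω ^ k ∂μ) :
    ∫ ω, maclaurin m f (X ω) ∂μ = ∫ ω, maclaurin m f (Y ω) ∂μ := by
  unfold maclaurin
  rw [integral_finsetSum _ fun k hk =>
      ((hX k (Nat.lt_succ_iff.1 (mem_range.1 hk))).const_mul _).div_const _,
    integral_finsetSum _ fun k hk =>
      ((hY k (Nat.lt_succ_iff.1 (mem_range.1 hk))).const_mul _).div_const _]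
  refine Finset.sum_congr rfl fun k hk => ?_
  rcases k.eq_zero_or_pos with rfl | hk0
  · simp
  · simp only [integral_div, integral_const_mul,
      hmom k hk0 (Nat.lt_succ_iff.1 (mem_range.1 hk))]

variable [IsFiniteMeasure μ]

lemma integrable_pow_of_integrable_abs_rpow {Z : Ω → ℝ} (hZ : AEStronglyMeasurable Z μ)
    {s : ℝ} (hZs : Integrable (fun ω => |Z ω| ^ s) μ) {k : ℕ} (hk : (k : ℝ) ≤ s) :
    Integrable (fun ω => Z ω ^ k) μ := by
  rcases k.eq_zero_or_pos with rfl | hk0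
  · simp
  have hs : 0 < s := lt_of_lt_of_le (by exact_mod_cast hk0) hk
  have hLs : MemLp Z (ENNReal.ofReal s) μ := by
    rw [← integrable_norm_rpow_iff hZ (by simpa using hs) ENNReal.ofReal_ne_top,
      ENNReal.toReal_ofReal hs.le]
    simpa using hZs
  have hLk : MemLp Z k μ := hLs.mono_exponent (by simpa using ENNReal.ofReal_le_ofReal hk)
  exact (integrable_norm_iff (hZ.pow k)).1 (by simpa [norm_pow] using hLk.integrable_norm_pow')

lemma integrable_comp_of_mem_zClass {m : ℕ} {α : ℝ} {f : ℝ → ℝ} (hf : f ∈ zClass m α)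
    {X : Ω → ℝ} (hX : AEStronglyMeasurable X μ) : Integrable (fun ω => f (X ω)) μ := by
  obtain ⟨⟨B, hB⟩, hfc, -⟩ := hf
  exact .of_bound (hfc.continuous.comp_aestronglyMeasurable hX) B (ae_of_all _ fun ω => hB _)

lemma abs_integral_comp_sub_maclaurin_le {m : ℕ} {α : ℝ} (hα : 0 < α) {f : ℝ → ℝ}
    (hf : f ∈ zClass m α) {X : Ω → ℝ} (hX : AEStronglyMeasurable X μ)
    (hXs : Integrable (fun ω => |X ω| ^ ((m : ℝ) + α)) μ) :
    |(∫ ω, f (X ω) ∂μ) - ∫ ω, maclaurin m f (X ω) ∂μ| ≤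
      Gamma (1 + α) / Gamma (m + 1 + α) * ∫ ω, |X ω| ^ ((m : ℝ) + α) ∂μ := by
  have hpow : ∀ k ≤ m, Integrable (fun ω => X ω ^ k) μ := fun k hk =>
    integrable_pow_of_integrable_abs_rpow hX hXs (by linarith [(Nat.cast_le (α := ℝ)).2 hk])
  rw [← integral_sub (integrable_comp_of_mem_zClass hf hX) (integrable_maclaurin_comp f hpow),
    ← integral_const_mul]
  refine norm_integral_le_of_norm_le (G := ℝ) (hXs.const_mul _) (ae_of_all _ fun ω => ?_)
  exact abs_sub_maclaurin_le hα m hf.2.1 (fun t => by simpa using hf.2.2 t 0) (X ω)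

lemma abs_integral_comp_sub_integral_comp_le {m : ℕ} {α : ℝ} (hα : 0 < α) {f : ℝ → ℝ}
    (hf : f ∈ zClass m α) {X Y : Ω → ℝ} (hX : AEStronglyMeasurable X μ)
    (hY : AEStronglyMeasurable Y μ) (hXs : Integrable (fun ω => |X ω| ^ ((m : ℝ) + α)) μ)
    (hYs : Integrable (fun ω => |Y ω| ^ ((m : ℝ) + α)) μ)
    (hmom : ∀ k : ℕ, 1 ≤ k → k ≤ m → ∫ ω, X ω ^ k ∂μ = ∫ ω, Y ω ^ k ∂μ) :
    |(∫ ω, f (X ω) ∂μ) - ∫ ω, f (Y ω) ∂μ| ≤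
      Gamma (1 + α) / Gamma (m + 1 + α) *
        ((∫ ω, |X ω| ^ ((m : ℝ) + α) ∂μ) + ∫ ω, |Y ω| ^ ((m : ℝ) + α) ∂μ) := by
  have hk : ∀ k ≤ m, (k : ℝ) ≤ m + α := fun k hk => by
    linarith [(Nat.cast_le (α := ℝ)).2 hk]
  have hT := integral_maclaurin_comp_eq_of_moments f
    (fun k hk' => integrable_pow_of_integrable_abs_rpow hX hXs (hk k hk'))
    (fun k hk' => integrable_pow_of_integrable_abs_rpow hY hYs (hk k hk')) hmom
  calc |(∫ ω, f (X ω) ∂μ) - ∫ ω, f (Y ω) ∂μ|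
      = |((∫ ω, f (X ω) ∂μ) - ∫ ω, maclaurin m f (X ω) ∂μ) -
          ((∫ ω, f (Y ω) ∂μ) - ∫ ω, maclaurin m f (Y ω) ∂μ)| := by rw [hT]; ring_nf
    _ ≤ _ := (abs_sub _ _).trans (by
        rw [mul_add]
        exact add_le_add (abs_integral_comp_sub_maclaurin_le hα hf hX hXs)
          (abs_integral_comp_sub_maclaurin_le hα hf hY hYs))

end Moments

theorem stmt3_general {Ω : Type*} [MeasurableSpace Ω] (P : Measure Ω) [IsProbabilityMeasure P]
    (m : ℕ) (α s : ℝ) (hα : 0 < α) (hs : s = m + α)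
    (X Y : Ω → ℝ) (hXm : Measurable X) (hYm : Measurable Y)
    (hXs : Integrable (fun ω => |X ω| ^ s) P)
    (hYs : Integrable (fun ω => |Y ω| ^ s) P)
    (hmom : ∀ k : ℕ, 1 ≤ k → k ≤ m → ∫ ω, X ω ^ k ∂P = ∫ ω, Y ω ^ k ∂P) :
    zeta m α P P X Y ≤
      Real.Gamma (1 + α) / Real.Gamma (1 + s) *
        ((∫ ω, |X ω| ^ s ∂P) + ∫ ω, |Y ω| ^ s ∂P) := by
  subst hs
  refine Real.sSup_le ?_ (by positivity)
  rintro _ ⟨f, hf, rfl⟩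
  rw [integral_map hXm.aemeasurable hf.2.1.continuous.aestronglyMeasurable,
    integral_map hYm.aemeasurable hf.2.1.continuous.aestronglyMeasurable,
    show (1 : ℝ) + (m + α) = m + 1 + α by ring]
  exact abs_integral_comp_sub_integral_comp_le hα hf hXm.aestronglyMeasurable
    hYm.aestronglyMeasurable hXs hYs hmom

theorem stmt3 {Ω : Type*} [MeasurableSpace Ω] (P : Measure Ω) [IsProbabilityMeasure P]
    (m : ℕ) (α s : ℝ) (hα : 0 < α) (hα1 : α ≤ 1) (hs : s = m + α)
    (X Y : Ω → ℝ) (hXm : Measurable X) (hYm : Measurable Y)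
    (hXs : Integrable (fun ω => |X ω| ^ s) P)
    (hYs : Integrable (fun ω => |Y ω| ^ s) P)
    (hmom : ∀ k : ℕ, 1 ≤ k → k ≤ m → ∫ ω, X ω ^ k ∂P = ∫ ω, Y ω ^ k ∂P) :
    zeta m α P P X Y ≤
      Real.Gamma (1 + α) / Real.Gamma (1 + s) *
        ((∫ ω, |X ω| ^ s ∂P) + ∫ ω, |Y ω| ^ s ∂P) :=
  stmt3_general P m α s hα hs X Y hXm hYm hXs hYs hmom
end

section
/- Let X_1, X_2, … be i.i.d. with E X_1 = a ≠ 0 and Var X_1 = σ² < ∞, and let N(λ) be Poisson with mean λ > 0, independent of the X_j. Then for 1 ≤ s ≤ 2 with s = m + α (m ∈ {0,1}, 0 < α ≤ 1), ζ_s( (1/(aλ)) Σ_{j=1}^{N(λ)} X_j , 1 ) ≤ (Γ(1+α)/Γ(1+s)) · ((a² + σ²)/(λ a²))^{s/2}. -/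
/-! With `W = (1 / (a λ)) ∑_{j < N} X_j`, conditioning on `N` (independent of the `X_j`) gives
Wald's identities `E W = 1` and `Var W = (a² + σ²) / (λ a²)`, the Poisson input being the factorial
moments `E N = λ`, `E N (N - 1) = λ²`. For `f` in the Zolotarev class, the Taylor expansion of
order `m` at `1` with `α`-Hölder remainder gives
`|f w - f 1 - D (w - 1)| ≤ Γ(1 + α) / Γ(1 + s) |w - 1| ^ s`; the linear term integrates to zero
because `E W = 1`, so `ζ_s(W, 1) ≤ Γ(1 + α) / Γ(1 + s) E |W - 1| ^ s`, and Lyapunov's inequality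
`E |W - 1| ^ s ≤ (E (W - 1)²) ^ (s / 2)` finishes. -/

open MeasureTheory ProbabilityTheory Real Set Finset

section Taylor

lemma integral_abs_rpow_of_nonneg {α b : ℝ} (hα : 0 ≤ α) (hb : 0 ≤ b) :
    ∫ u in (0 : ℝ)..b, |u| ^ α = b ^ (α + 1) / (α + 1) := by
  rw [intervalIntegral.integral_congr fun u hu => by
      rw [abs_of_nonneg (by rw [uIcc_of_le hb] at hu; exact hu.1)],
    integral_rpow (Or.inl (by linarith)), zero_rpow (by linarith), sub_zero]

lemma abs_integral_abs_rpow {α : ℝ} (hα : 0 ≤ α) (b : ℝ) :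
    |∫ u in (0 : ℝ)..b, |u| ^ α| = |b| ^ (α + 1) / (α + 1) := by
  rcases le_total 0 b with hb | hb
  · rw [integral_abs_rpow_of_nonneg hα hb, abs_of_nonneg hb,
      abs_of_nonneg (by positivity)]
  · have hneg : ∫ u in (0 : ℝ)..b, |u| ^ α = -∫ u in (0 : ℝ)..(-b), |u| ^ α := by
      simpa [abs_neg, intervalIntegral.integral_symm (-b)] using
        intervalIntegral.integral_comp_neg (a := 0) (b := b) fun u => |u| ^ α
    rw [hneg, abs_neg, integral_abs_rpow_of_nonneg hα (by linarith), abs_of_nonpos hb,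
      abs_of_nonneg (div_nonneg (rpow_nonneg (neg_nonneg.mpr hb) _) (by linarith))]

lemma abs_sub_sub_deriv_mul_le {f : ℝ → ℝ} {α x : ℝ} (hα : 0 ≤ α) (hf : ContDiff ℝ 1 f)
    (hH : ∀ t, |deriv f t - deriv f x| ≤ |t - x| ^ α) (y : ℝ) :
    |f y - f x - deriv f x * (y - x)| ≤ |y - x| ^ (α + 1) / (α + 1) := by
  have hc : Continuous (deriv f) := hf.continuous_deriv le_rfl
  have hrem : f y - f x - deriv f x * (y - x) = ∫ t in x..y, (deriv f t - deriv f x) := by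
    rw [intervalIntegral.integral_sub (hc.intervalIntegrable x y) intervalIntegrable_const,
      intervalIntegral.integral_deriv_eq_sub (fun t _ => hf.differentiable one_ne_zero t)
        (hc.intervalIntegrable x y), intervalIntegral.integral_const, smul_eq_mul]
    ring
  have hcont : Continuous fun t => |t - x| ^ α :=
    (continuous_id.sub continuous_const).abs.rpow_const fun _ => Or.inr hα
  calc |f y - f x - deriv f x * (y - x)|
      ≤ |∫ t in x..y, |t - x| ^ α| := by
        rw [hrem, ← Real.norm_eq_abs]
        exact intervalIntegral.norm_integral_le_abs_of_norm_le
          (Filter.Eventually.of_forall fun t => hH t) (hcont.intervalIntegrable x y)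
    _ = |y - x| ^ (α + 1) / (α + 1) := by
        rw [intervalIntegral.integral_comp_sub_right (fun u => |u| ^ α), sub_self,
          abs_integral_abs_rpow hα]

end Taylor

section Zolotarev

lemma exists_abs_sub_sub_mul_le_of_mem_zClass {m : ℕ} {α : ℝ} {f : ℝ → ℝ} (hf : f ∈ zClass m α)
    (hm : m ≤ 1) (hα1 : α ≤ 1) (hs1 : 1 ≤ m + α) (x : ℝ) :
    ∃ D, ∀ y, |f y - f x - D * (y - x)|
      ≤ Gamma (1 + α) / Gamma (1 + (m + α)) * |y - x| ^ (m + α) := by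
  obtain ⟨-, hsmooth, hHolder⟩ := hf
  interval_cases m
  · obtain rfl : α = 1 := by push_cast at hs1; linarith
    refine ⟨0, fun y => ?_⟩
    norm_num [Real.Gamma_two]
    simpa using hHolder y x
  · push_cast at hs1 ⊢
    have hα : 0 ≤ α := by linarith
    have hK : Gamma (1 + α) / Gamma (1 + (1 + α)) = (α + 1)⁻¹ := by
      rw [add_comm 1 (1 + α), Real.Gamma_add_one (by linarith), add_comm 1 α,
        div_mul_cancel_right₀ (Real.Gamma_pos_of_pos (by linarith)).ne']
    refine ⟨deriv f x, fun y => ?_⟩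
    rw [hK, add_comm 1 α, inv_mul_eq_div]
    exact abs_sub_sub_deriv_mul_le hα (by exact_mod_cast hsmooth)
      (fun t => by simpa using hHolder t x) y

variable {Ω : Type*} [MeasurableSpace Ω] {P : Measure Ω} [IsProbabilityMeasure P]
  {W : Ω → ℝ} {c : ℝ} {m : ℕ} {α : ℝ}

lemma abs_integral_comp_sub_le_of_mem_zClass {f : ℝ → ℝ} (hf : f ∈ zClass m α)
    (hm : m ≤ 1) (hα1 : α ≤ 1) (hs1 : 1 ≤ m + α) (hWi : Integrable W P)
    (hWc : ∫ ω, W ω ∂P = c) (hWs : Integrable (fun ω => |W ω - c| ^ (m + α)) P) :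
    |∫ ω, f (W ω) ∂P - f c|
      ≤ Gamma (1 + α) / Gamma (1 + (m + α)) * ∫ ω, |W ω - c| ^ (m + α) ∂P := by
  obtain ⟨D, hD⟩ := exists_abs_sub_sub_mul_le_of_mem_zClass hf hm hα1 hs1 c
  obtain ⟨⟨C, hC⟩, hsmooth, -⟩ := hf
  have hfW : Integrable (fun ω => f (W ω)) P :=
    .of_bound (hsmooth.continuous.comp_aestronglyMeasurable hWi.aestronglyMeasurable) C
      (Filter.Eventually.of_forall fun ω => hC (W ω))
  have hlin : Integrable (fun ω => D * (W ω - c)) P := (hWi.sub (integrable_const c)).const_mul D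
  have hcentered : ∫ ω, f (W ω) ∂P - f c = ∫ ω, (f (W ω) - f c - D * (W ω - c)) ∂P := by
    rw [integral_sub (f := fun ω => f (W ω) - f c) (hfW.sub (integrable_const _)) hlin,
      integral_sub hfW (integrable_const _), integral_const_mul,
      integral_sub hWi (integrable_const c), hWc]
    simp
  calc |∫ ω, f (W ω) ∂P - f c|
      ≤ ∫ ω, |f (W ω) - f c - D * (W ω - c)| ∂P := hcentered ▸ abs_integral_le_integral_abs
    _ ≤ ∫ ω, Gamma (1 + α) / Gamma (1 + (m + α)) * |W ω - c| ^ (m + α) ∂P :=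
        integral_mono_of_nonneg (Filter.Eventually.of_forall fun ω => abs_nonneg _)
          (hWs.const_mul _) (Filter.Eventually.of_forall fun ω => hD (W ω))
    _ = _ := integral_const_mul _ _

lemma zeta_const_le (hm : m ≤ 1) (hα1 : α ≤ 1) (hs1 : 1 ≤ m + α) (hWi : Integrable W P)
    (hWc : ∫ ω, W ω ∂P = c) (hWs : Integrable (fun ω => |W ω - c| ^ (m + α)) P) :
    zeta m α P P W (fun _ => c)
      ≤ Gamma (1 + α) / Gamma (1 + (m + α)) * ∫ ω, |W ω - c| ^ (m + α) ∂P := by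
  have hα : 0 ≤ α := by
    have : (m : ℝ) ≤ 1 := by exact_mod_cast hm
    linarith
  refine Real.sSup_le ?_ (by positivity)
  rintro d ⟨f, hf, rfl⟩
  rw [integral_map hWi.aemeasurable hf.2.1.continuous.aestronglyMeasurable, Measure.map_const,
    measure_univ, one_smul, integral_dirac]
  exact abs_integral_comp_sub_le_of_mem_zClass hf hm hα1 hs1 hWi hWc hWs

end Zolotarev

section Lyapunov

variable {Ω : Type*} [MeasurableSpace Ω] {P : Measure Ω} [IsProbabilityMeasure P]
  {Y : Ω → ℝ} {s : ℝ}

lemma sq_rpow_half (y s : ℝ) : (y ^ 2) ^ (s / 2) = |y| ^ s := by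
  rw [← sq_abs, ← Real.rpow_two, ← Real.rpow_mul (abs_nonneg y)]
  ring_nf

lemma MeasureTheory.MemLp.integrable_abs_rpow (hY : MemLp Y 2 P) (hs0 : 0 ≤ s) (hs2 : s ≤ 2) :
    Integrable (fun ω => |Y ω| ^ s) P := by
  have h := (hY.mono_exponent (p := ENNReal.ofReal s) (by simpa using ENNReal.ofReal_le_ofReal hs2))
    |>.integrable_norm_rpow'
  simpa [ENNReal.toReal_ofReal hs0] using h

lemma integral_abs_rpow_le (hY : MemLp Y 2 P) (hs0 : 0 ≤ s) (hs2 : s ≤ 2) :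
    ∫ ω, |Y ω| ^ s ∂P ≤ (∫ ω, Y ω ^ 2 ∂P) ^ (s / 2) := by
  have h := (Real.concaveOn_rpow (p := s / 2) (by linarith) (by linarith)).le_map_integral
    (Real.continuous_rpow_const (by linarith)).continuousOn isClosed_Ici
    (Filter.Eventually.of_forall fun ω => sq_nonneg (Y ω)) hY.integrable_sq
    (by simpa only [Function.comp_def, sq_rpow_half] using hY.integrable_abs_rpow hs0 hs2)
  simpa only [sq_rpow_half] using h

end Lyapunov

lemma zeta_integral_le_variance {Ω : Type*} [MeasurableSpace Ω] {P : Measure Ω}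
    [IsProbabilityMeasure P] {W : Ω → ℝ} {m : ℕ} {α : ℝ} (hm : m ≤ 1) (hα1 : α ≤ 1)
    (hs1 : 1 ≤ m + α) (hs2 : m + α ≤ 2) (hW : MemLp W 2 P) :
    zeta m α P P W (fun _ => ∫ ω, W ω ∂P)
      ≤ Gamma (1 + α) / Gamma (1 + (m + α)) * variance W P ^ ((m + α) / 2) := by
  have hα : 0 ≤ α := by
    have : (m : ℝ) ≤ 1 := by exact_mod_cast hm
    linarith
  have hWc : MemLp (fun ω => W ω - ∫ ω, W ω ∂P) 2 P := hW.sub (memLp_const _)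
  calc zeta m α P P W (fun _ => ∫ ω, W ω ∂P)
      ≤ Gamma (1 + α) / Gamma (1 + (m + α)) * ∫ ω, |W ω - ∫ ω, W ω ∂P| ^ (m + α) ∂P :=
        zeta_const_le hm hα1 hs1 (hW.integrable one_le_two) rfl
          (hWc.integrable_abs_rpow (by linarith) hs2)
    _ ≤ Gamma (1 + α) / Gamma (1 + (m + α))
          * (∫ ω, (W ω - ∫ ω, W ω ∂P) ^ 2 ∂P) ^ ((m + α) / 2) := by
        gcongr
        exact integral_abs_rpow_le hWc (by linarith) hs2
    _ = _ := by rw [variance_eq_integral hW.aestronglyMeasurable.aemeasurable]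

section Poisson

lemma hasSum_poisson_mul_descFactorial (lam : ℝ) (r : ℕ) :
    HasSum (fun k : ℕ => exp (-lam) * lam ^ k / k.factorial * k.descFactorial r) (lam ^ r) := by
  have hexp : HasSum (fun k : ℕ => exp (-lam) * lam ^ k / k.factorial) 1 := by
    have h := NormedSpace.expSeries_div_hasSum_exp lam
    rw [← Real.exp_eq_exp_ℝ] at h
    simpa [← Real.exp_add, mul_div_assoc] using h.mul_left (exp (-lam))
  rw [← hasSum_nat_add_iff' r]
  have hlow : ∑ k ∈ range r, exp (-lam) * lam ^ k / k.factorial * k.descFactorial r = 0 :=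
    sum_eq_zero fun k hk => by
      simp [Nat.descFactorial_eq_zero_iff_lt.mpr (mem_range.mp hk)]
  rw [hlow, sub_zero, ← mul_one (lam ^ r)]
  refine (hexp.mul_left (lam ^ r)).congr_fun fun k => ?_
  have hfac := Nat.factorial_mul_descFactorial (Nat.le_add_left r k)
  rw [Nat.add_sub_cancel] at hfac
  rw [← hfac]
  push_cast
  field_simp
  ring

lemma hasSum_poisson_mul_self (lam : ℝ) :
    HasSum (fun k : ℕ => exp (-lam) * lam ^ k / k.factorial * k) lam := by
  simpa using hasSum_poisson_mul_descFactorial lam 1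

lemma hasSum_poisson_mul_sq (lam : ℝ) :
    HasSum (fun k : ℕ => exp (-lam) * lam ^ k / k.factorial * k ^ 2) (lam ^ 2 + lam) := by
  refine ((hasSum_poisson_mul_descFactorial lam 2).add (hasSum_poisson_mul_self lam)).congr_fun
    fun k => ?_
  rcases k with _ | k <;> simp [Nat.descFactorial_succ]
  ring

end Poisson

section RandomIndex

variable {Ω β : Type*} [MeasurableSpace Ω] [MeasurableSpace β] {P : Measure Ω}
  {N : Ω → ℕ} {V : Ω → β}

lemma map_restrict_preimage_singleton_of_indepFun (hV : Measurable V) (hNV : IndepFun N V P)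
    (k : ℕ) : (P.restrict (N ⁻¹' {k})).map V = P (N ⁻¹' {k}) • P.map V := by
  ext B hB
  rw [Measure.map_apply hV hB, Measure.restrict_apply (hV hB), Measure.smul_apply,
    Measure.map_apply hV hB, smul_eq_mul, Set.inter_comm]
  exact indepFun_iff_measure_inter_preimage_eq_mul.mp hNV {k} B (measurableSet_singleton k) hB

lemma setIntegral_preimage_singleton_of_indepFun (hV : Measurable V) (hNV : IndepFun N V P)
    (k : ℕ) {G : β → ℝ} (hG : Measurable G) :
    ∫ ω in N ⁻¹' {k}, G (V ω) ∂P = P.real (N ⁻¹' {k}) * ∫ ω, G (V ω) ∂P := by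
  rw [← integral_map hV.aemeasurable hG.aestronglyMeasurable,
    map_restrict_preimage_singleton_of_indepFun hV hNV k, integral_smul_measure,
    integral_map hV.aemeasurable hG.aestronglyMeasurable, smul_eq_mul, measureReal_def]

end RandomIndex

section RandomSum

variable {Ω : Type*} {X : ℕ → Ω → ℝ} {N : Ω → ℕ}

def randomSum (X : ℕ → Ω → ℝ) (N : Ω → ℕ) (ω : Ω) : ℝ := ∑ j ∈ range (N ω), X j ω

lemma randomSum_of_mem_preimage {k : ℕ} {ω : Ω} (hω : ω ∈ N ⁻¹' {k}) :
    randomSum X N ω = ∑ j ∈ range k, X j ω := by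
  rw [Set.mem_preimage, Set.mem_singleton_iff] at hω
  rw [randomSum, hω]

lemma iUnion_preimage_singleton (N : Ω → ℕ) : ⋃ k, N ⁻¹' {k} = Set.univ := by
  ext ω; simp

variable [MeasurableSpace Ω] {P : Measure Ω}

lemma measurable_randomSum (hX : ∀ j, Measurable (X j)) (hN : Measurable N) :
    Measurable (randomSum X N) := by
  have hsum : Measurable fun p : Ω × ℕ => ∑ j ∈ range p.2, X j p.1 :=
    measurable_from_prod_countable_left fun k => Finset.measurable_sum (range k) fun j _ => hX j
  exact hsum.comp (measurable_id.prodMk hN)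

variable {F : ℝ → ℝ}

lemma setIntegral_comp_randomSum (hX : ∀ j, Measurable (X j)) (hN : Measurable N)
    (hNX : IndepFun N (fun ω j => X j ω) P) (hF : Measurable F) (k : ℕ) :
    ∫ ω in N ⁻¹' {k}, F (randomSum X N ω) ∂P
      = P.real (N ⁻¹' {k}) * ∫ ω, F (∑ j ∈ range k, X j ω) ∂P := by
  rw [setIntegral_congr_fun (hN (measurableSet_singleton k))
    fun ω hω => congrArg F (randomSum_of_mem_preimage hω)]
  exact setIntegral_preimage_singleton_of_indepFun (measurable_pi_lambda _ hX) hNX k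
    (hF.comp (Finset.measurable_sum _ fun j _ => measurable_pi_apply j))

lemma integrable_comp_randomSum (hX : ∀ j, Measurable (X j)) (hN : Measurable N)
    (hNX : IndepFun N (fun ω j => X j ω) P) (hF : Measurable F)
    (hFi : ∀ k, Integrable (fun ω => F (∑ j ∈ range k, X j ω)) P)
    (hsum : Summable fun k => P.real (N ⁻¹' {k}) * ∫ ω, |F (∑ j ∈ range k, X j ω)| ∂P) :
    Integrable (fun ω => F (randomSum X N ω)) P := by
  rw [← integrableOn_univ, ← iUnion_preimage_singleton N]
  refine integrableOn_iUnion_of_summable_integral_norm (fun k => ?_) ?_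
  · exact (hFi k).integrableOn.congr_fun
      (fun ω hω => congrArg F (randomSum_of_mem_preimage hω).symm)
      (hN (measurableSet_singleton k))
  · simpa only [Real.norm_eq_abs, setIntegral_comp_randomSum hX hN hNX hF.abs] using hsum

lemma hasSum_integral_comp_randomSum (hX : ∀ j, Measurable (X j)) (hN : Measurable N)
    (hNX : IndepFun N (fun ω j => X j ω) P) (hF : Measurable F)
    (hFi : Integrable (fun ω => F (randomSum X N ω)) P) :
    HasSum (fun k => P.real (N ⁻¹' {k}) * ∫ ω, F (∑ j ∈ range k, X j ω) ∂P)
      (∫ ω, F (randomSum X N ω) ∂P) := by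
  have h := hasSum_integral_iUnion (fun k => hN (measurableSet_singleton k))
    (fun i j hij => Set.disjoint_left.mpr fun ω hi hj => hij (hi.symm.trans hj))
    (hFi.integrableOn (s := ⋃ k, N ⁻¹' {k}))
  rw [iUnion_preimage_singleton, setIntegral_univ] at h
  simpa only [setIntegral_comp_randomSum hX hN hNX hF] using h

end RandomSum

section Wald

variable {Ω : Type*} [MeasurableSpace Ω] {P : Measure Ω} {X : ℕ → Ω → ℝ} {a σ : ℝ}

lemma integral_sum_range (hX : ∀ j, Integrable (X j) P) (hmean : ∀ j, ∫ ω, X j ω ∂P = a)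
    (k : ℕ) : ∫ ω, ∑ j ∈ range k, X j ω ∂P = k * a := by
  rw [integral_finsetSum _ fun j _ => hX j]
  simp [hmean]

variable [IsProbabilityMeasure P]

lemma integral_sum_range_sq (hX : ∀ j, MemLp (X j) 2 P)
    (hindep : Pairwise fun i j => IndepFun (X i) (X j) P)
    (hmean : ∀ j, ∫ ω, X j ω ∂P = a) (hvar : ∀ j, variance (X j) P = σ ^ 2) (k : ℕ) :
    ∫ ω, (∑ j ∈ range k, X j ω) ^ 2 ∂P = k * σ ^ 2 + (k * a) ^ 2 := by
  have hv := variance_eq_sub (memLp_finsetSum' (range k) fun j _ => hX j)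
  rw [IndepFun.variance_sum (fun j _ => hX j) fun i _ j _ hij => hindep hij] at hv
  simp only [Pi.pow_apply, Finset.sum_apply, hvar, sum_const, card_range, nsmul_eq_mul] at hv
  rw [integral_sum_range (fun j => (hX j).integrable one_le_two) hmean k] at hv
  linarith

lemma hasSum_integral_sum_range_sq {N : Ω → ℕ} {ν₁ ν₂ : ℝ} (hX : ∀ j, MemLp (X j) 2 P)
    (hindep : Pairwise fun i j => IndepFun (X i) (X j) P)
    (hmean : ∀ j, ∫ ω, X j ω ∂P = a) (hvar : ∀ j, variance (X j) P = σ ^ 2)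
    (hN₁ : HasSum (fun k => P.real (N ⁻¹' {k}) * k) ν₁)
    (hN₂ : HasSum (fun k => P.real (N ⁻¹' {k}) * k ^ 2) ν₂) :
    HasSum (fun k => P.real (N ⁻¹' {k}) * ∫ ω, (∑ j ∈ range k, X j ω) ^ 2 ∂P)
      (σ ^ 2 * ν₁ + a ^ 2 * ν₂) := by
  simp only [integral_sum_range_sq hX hindep hmean hvar]
  exact ((hN₁.mul_left (σ ^ 2)).add (hN₂.mul_left (a ^ 2))).congr_fun fun k => by ring

variable {N : Ω → ℕ} {ν₁ ν₂ : ℝ}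
  (hXm : ∀ j, Measurable (X j)) (hN : Measurable N) (hNX : IndepFun N (fun ω j => X j ω) P)
  (hX : ∀ j, MemLp (X j) 2 P) (hindep : Pairwise fun i j => IndepFun (X i) (X j) P)
  (hmean : ∀ j, ∫ ω, X j ω ∂P = a) (hvar : ∀ j, variance (X j) P = σ ^ 2)
  (hN₁ : HasSum (fun k => P.real (N ⁻¹' {k}) * k) ν₁)
  (hN₂ : HasSum (fun k => P.real (N ⁻¹' {k}) * k ^ 2) ν₂)
include hXm hN hNX hX hindep hmean hvar hN₁ hN₂

lemma memLp_randomSum : MemLp (randomSum X N) 2 P := by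
  have hm := measurable_randomSum hXm hN
  rw [memLp_two_iff_integrable_sq hm.aestronglyMeasurable]
  refine integrable_comp_randomSum hXm hN hNX (F := fun x => x ^ 2) (by fun_prop)
    (fun k => (memLp_finsetSum (range k) fun j _ => hX j).integrable_sq) ?_
  simpa only [abs_sq] using (hasSum_integral_sum_range_sq hX hindep hmean hvar hN₁ hN₂).summable

lemma integral_randomSum : ∫ ω, randomSum X N ω ∂P = a * ν₁ := by
  refine (hasSum_integral_comp_randomSum hXm hN hNX measurable_id
    ((memLp_randomSum hXm hN hNX hX hindep hmean hvar hN₁ hN₂).integrable one_le_two)).unique ?_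
  simp only [id, integral_sum_range (fun j => (hX j).integrable one_le_two) hmean]
  exact (hN₁.mul_left a).congr_fun fun k => by ring

lemma variance_randomSum : variance (randomSum X N) P = σ ^ 2 * ν₁ + a ^ 2 * (ν₂ - ν₁ ^ 2) := by
  have hS := memLp_randomSum hXm hN hNX hX hindep hmean hvar hN₁ hN₂
  have hsq : ∫ ω, randomSum X N ω ^ 2 ∂P = σ ^ 2 * ν₁ + a ^ 2 * ν₂ :=
    (hasSum_integral_comp_randomSum hXm hN hNX (F := fun x => x ^ 2) (by fun_prop)
      hS.integrable_sq).unique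
      (hasSum_integral_sum_range_sq hX hindep hmean hvar hN₁ hN₂)
  rw [variance_eq_sub hS, Pi.pow_def, hsq,
    integral_randomSum hXm hN hNX hX hindep hmean hvar hN₁ hN₂]
  ring

end Wald

theorem stmt6 {Ω : Type*} [MeasurableSpace Ω] (P : Measure Ω) [IsProbabilityMeasure P]
    (X : ℕ → Ω → ℝ) (N : Ω → ℕ) (a σ lam : ℝ) (m : ℕ) (α s : ℝ)
    (hlam : 0 < lam) (hα : 0 < α) (hα1 : α ≤ 1) (hs : s = m + α)
    (hs1 : 1 ≤ s) (hs2 : s ≤ 2)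
    (hXmeas : ∀ j, Measurable (X j))
    (hindep : iIndepFun X P)
    (hident : ∀ j, P.map (X j) = P.map (X 0))
    (hL2 : MemLp (X 0) 2 P)
    (hmean : ∫ ω, X 0 ω ∂P = a) (ha : a ≠ 0) (hvar : variance (X 0) P = σ ^ 2)
    (hNmeas : Measurable N)
    (hNdist : ∀ k : ℕ, (P {ω | N ω = k}).toReal = Real.exp (-lam) * lam ^ k / k.factorial)
    (hNindep : IndepFun N (fun ω j => X j ω) P) :
    zeta m α P P (fun ω => (1 / (a * lam)) * ∑ j ∈ Finset.range (N ω), X j ω)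
        (fun _ => (1 : ℝ)) ≤
      Real.Gamma (1 + α) / Real.Gamma (1 + s) *
        ((a ^ 2 + σ ^ 2) / (lam * a ^ 2)) ^ (s / 2) := by
  have hXdist j : IdentDistrib (X j) (X 0) P P :=
    ⟨(hXmeas j).aemeasurable, (hXmeas 0).aemeasurable, hident j⟩
  have hX j : MemLp (X j) 2 P := (hXdist j).memLp_iff.mpr hL2
  have hXmean j : ∫ ω, X j ω ∂P = a := (hXdist j).integral_eq.trans hmean
  have hXvar j : variance (X j) P = σ ^ 2 := (hXdist j).variance_eq.trans hvar
  have hq (k : ℕ) : P.real (N ⁻¹' {k}) = exp (-lam) * lam ^ k / k.factorial := hNdist k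
  have hN₁ : HasSum (fun k => P.real (N ⁻¹' {k}) * k) lam := by
    simpa only [hq] using hasSum_poisson_mul_self lam
  have hN₂ : HasSum (fun k => P.real (N ⁻¹' {k}) * k ^ 2) (lam ^ 2 + lam) := by
    simpa only [hq] using hasSum_poisson_mul_sq lam
  have hpair : Pairwise fun i j => IndepFun (X i) (X j) P := fun i j hij => hindep.indepFun hij
  set W : Ω → ℝ := fun ω => 1 / (a * lam) * randomSum X N ω
  have hW : MemLp W 2 P :=
    (memLp_randomSum hXmeas hNmeas hNindep hX hpair hXmean hXvar hN₁ hN₂).const_mul _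
  have hW1 : ∫ ω, W ω ∂P = 1 := by
    rw [integral_const_mul, integral_randomSum hXmeas hNmeas hNindep hX hpair hXmean hXvar hN₁ hN₂]
    field_simp
  have hWvar : variance W P = (a ^ 2 + σ ^ 2) / (lam * a ^ 2) := by
    rw [variance_const_mul,
      variance_randomSum hXmeas hNmeas hNindep hX hpair hXmean hXvar hN₁ hN₂]
    field_simp
    ring
  have hm : m ≤ 1 := by
    have : (m : ℝ) < 2 := by linarith
    exact Nat.lt_succ_iff.mp (by exact_mod_cast this)
  subst hs
  have h := zeta_integral_le_variance hm hα1 hs1 hs2 hW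
  rwa [hW1, hWvar] at h
end
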